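/- arXiv:0709.0837 — 3 statements merged into one kernel-verified Lean document; each statement's English description precedes it below -/
import Mathlib

section
/- Let (E,M) be a factorization system on a category C with terminal object 1, let e: P → X be a morphism in E, let x: 1 → X be a point, and let λ: ↓e → ν(x) be a colimiting cone. Then λ is an isomorphism in C/X; consequently ν(x) is an isomorphism of C (so x is a final point, x ∈ E) and x is the absolute colimit of e. -/
open CategoryTheory CategoryTheory.Limits

universe v u

/-- `e ⊥ m`: every commutative square from `e` to `m` has a unique diagonal filler. -/
def IsOrth {C : Type u} [Category.{v} C] {A B M N : C} (e : A ⟶ B) (m : M ⟶ N) : Prop :=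
  ∀ (u : A ⟶ M) (v : B ⟶ N), e ≫ v = u ≫ m →
    ∃! w : B ⟶ M, e ≫ w = u ∧ w ≫ m = v

/-- `^⊥M`: the class of morphisms left-orthogonal to every morphism in `M`. -/
def leftOrth {C : Type u} [Category.{v} C] (M : MorphismProperty C) : MorphismProperty C :=
  fun _ _ e => ∀ ⦃M₀ N : C⦄ (m : M₀ ⟶ N), M m → IsOrth e m

/-- `E^⊥`: the class of morphisms right-orthogonal to every morphism in `E`. -/
def rightOrth {C : Type u} [Category.{v} C] (E : MorphismProperty C) : MorphismProperty C :=
  fun _ _ m => ∀ ⦃A B : C⦄ (e : A ⟶ B), E e → IsOrth e m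

/-- A pre-factorization system: a pair of classes `(E, M)` with `E = ^⊥M` and `M = E^⊥`. -/
structure PreFactorizationSystem (C : Type u) [Category.{v} C] where
  E : MorphismProperty C
  M : MorphismProperty C
  E_eq : E = leftOrth M
  M_eq : M = rightOrth E


/-- A factorization system with a chosen `(E,M)`-factorization `f = η f ≫ refl f` of every
morphism; `refl f` is the discrete reflection `↓f` of `f`. -/
structure FactorizationData (C : Type u) [Category.{v} C] extends PreFactorizationSystem C where
  mid : ∀ {A B : C}, (A ⟶ B) → C
  eta : ∀ {A B : C} (f : A ⟶ B), A ⟶ mid f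
  refl : ∀ {A B : C} (f : A ⟶ B), mid f ⟶ B
  eta_mem : ∀ {A B : C} (f : A ⟶ B), E (eta f)
  refl_mem : ∀ {A B : C} (f : A ⟶ B), M (refl f)
  fac : ∀ {A B : C} (f : A ⟶ B), eta f ≫ refl f = f

variable {C : Type u} [Category.{v} C]

/-- A cone with base `m : M₀ ⟶ X` and vertex the point `x : 1 ⟶ X` is a morphism
`lam : m ⟶ ν(x)` over `X`, where `ν(x) = ↓x` is the neighborhood of `x`. -/
def IsCone [HasTerminal C] (D : FactorizationData C) {M₀ X : C} (m : M₀ ⟶ X)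
    (x : ⊤_ C ⟶ X) (lam : M₀ ⟶ D.mid x) : Prop :=
  lam ≫ D.refl x = m

/-- A cone `lam : m ⟶ ν(x)` is colimiting if every cone `mu : m ⟶ ν(y)` factors uniquely
through it via a morphism `ν(x) ⟶ ν(y)` over `X`; then `x` is the colimit of `m`. -/
def IsColimiting [HasTerminal C] (D : FactorizationData C) {M₀ X : C} (m : M₀ ⟶ X)
    (x : ⊤_ C ⟶ X) (lam : M₀ ⟶ D.mid x) : Prop :=
  ∀ (y : ⊤_ C ⟶ X) (mu : M₀ ⟶ D.mid y), IsCone D m y mu →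
    ∃! θ : D.mid x ⟶ D.mid y, θ ≫ D.refl y = D.refl x ∧ lam ≫ θ = mu

/-! Since `e ∈ E`, orthogonality of `e` against its own `M`-part `↓e` makes `↓e` invertible.
A cone over an isomorphism `↓e` is split by `↓x ≫ (↓e)⁻¹`, and the uniqueness clause of the
colimit (applied to the cone `λ` itself) turns this splitting into a two-sided inverse of `λ`.
Then `↓x` is invertible as well, which for a point `x = η_x ≫ ↓x` means `x ∈ E`. -/

namespace IsOrth

variable {A B M N : C}

theorem ext {e : A ⟶ B} {m : M ⟶ N} (h : IsOrth e m) {w₁ w₂ : B ⟶ M}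
    (he : e ≫ w₁ = e ≫ w₂) (hm : w₁ ≫ m = w₂ ≫ m) : w₁ = w₂ :=
  (h (e ≫ w₁) (w₁ ≫ m) (Category.assoc _ _ _).symm).unique ⟨rfl, rfl⟩ ⟨he.symm, hm.symm⟩

theorem comp_isIso {B' : C} {e : A ⟶ B} {m : M ⟶ N} (h : IsOrth e m) (i : B ⟶ B') [IsIso i] :
    IsOrth (e ≫ i) m := by
  intro u v hsq
  obtain ⟨w, ⟨hew, hwm⟩, hw⟩ := h u (i ≫ v) (by rw [← Category.assoc, hsq])
  refine ⟨inv i ≫ w, ⟨by simpa using hew, by simp [hwm]⟩, fun w' ⟨hew', hw'm⟩ => ?_⟩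
  rw [← hw (i ≫ w') ⟨by simpa using hew', by simp [hw'm]⟩, IsIso.inv_hom_id_assoc]

end IsOrth

theorem isIso_of_isOrth_of_fac {A B I : C} {f : A ⟶ B} {a : A ⟶ I} {m : I ⟶ B}
    (hfac : a ≫ m = f) (hf : IsOrth f m) (ha : IsOrth a m) : IsIso m := by
  obtain ⟨s, ⟨hfs, hsm⟩, -⟩ := hf a (𝟙 B) (by rw [Category.comp_id, hfac])
  have hms : m ≫ s = 𝟙 I :=
    ha.ext (by rw [reassoc_of% hfac, hfs, Category.comp_id]) (by rw [Category.assoc, hsm]; simp)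
  exact ⟨s, hms, hsm⟩

namespace FactorizationData

variable (D : FactorizationData C)

theorem isOrth_of_E_of_M {A B M N : C} {e : A ⟶ B} {m : M ⟶ N} (he : D.E e) (hm : D.M m) :
    IsOrth e m :=
  (D.M_eq ▸ hm : rightOrth D.E m) e he

theorem E_iff_isIso_refl {A B : C} (f : A ⟶ B) : D.E f ↔ IsIso (D.refl f) := by
  constructor
  · intro hf
    exact isIso_of_isOrth_of_fac (D.fac f) (D.isOrth_of_E_of_M hf (D.refl_mem f))
      (D.isOrth_of_E_of_M (D.eta_mem f) (D.refl_mem f))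
  · intro _
    rw [← D.fac f, D.E_eq]
    exact fun _ _ m hm => (D.isOrth_of_E_of_M (D.eta_mem f) hm).comp_isIso _

end FactorizationData

theorem IsColimiting.isIso_of_isIso [HasTerminal C] {D : FactorizationData C} {M₀ X : C}
    {m : M₀ ⟶ X} {x : ⊤_ C ⟶ X} {lam : M₀ ⟶ D.mid x} [IsIso m] (hcone : IsCone D m x lam)
    (hcolim : IsColimiting D m x lam) : IsIso lam := by
  have hcone' : lam ≫ D.refl x = m := hcone
  have hsplit : lam ≫ (D.refl x ≫ inv m) = 𝟙 M₀ := by rw [reassoc_of% hcone', IsIso.hom_inv_id]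
  have hendo : (D.refl x ≫ inv m) ≫ lam = 𝟙 (D.mid x) :=
    (hcolim x lam hcone).unique
      ⟨by simp [hcone'], by rw [← Category.assoc, hsplit, Category.id_comp]⟩
      ⟨Category.id_comp _, Category.comp_id _⟩
  exact ⟨_, hsplit, hendo⟩

/-- if `e : P ⟶ X` is in `E` and `lam : ↓e ⟶ ν(x)` is a colimiting cone, then
`lam` is an isomorphism in `C/X`; consequently `ν(x)` is an isomorphism of `C` (so `x` is a
final point, `x ∈ E`) and `x` is the absolute colimit of `e`. -/
theorem colimit_of_final_is_final_point [HasTerminal C] (D : FactorizationData C)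
    {P X : C} (e : P ⟶ X) (he : D.E e) (x : ⊤_ C ⟶ X) (lam : D.mid e ⟶ D.mid x)
    (hcone : IsCone D (D.refl e) x lam) (hcolim : IsColimiting D (D.refl e) x lam) :
    IsIso lam ∧ IsIso (D.refl x) ∧ D.E x ∧
      Nonempty ((Over.mk (D.refl e) : Over X) ≅ Over.mk (D.refl x)) := by
  have hcone' : lam ≫ D.refl x = D.refl e := hcone
  have := (D.E_iff_isIso_refl e).1 he
  have hlam : IsIso lam := hcolim.isIso_of_isIso hcone
  have : IsIso (lam ≫ D.refl x) := by rw [hcone']; infer_instance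
  have hreflx : IsIso (D.refl x) := IsIso.of_isIso_comp_left lam _
  exact ⟨hlam, hreflx, (D.E_iff_isIso_refl x).2 hreflx, ⟨Over.isoMk (asIso lam) hcone'⟩⟩
end

section
/- Let (E,M) be a factorization system on a category C with terminal object 1, and let X be an object of C. Then X has a final point (a point x: 1 → X with x ∈ E) if and only if there exist a morphism e: P → X in E, a point x: 1 → X and a colimiting cone λ: ↓e → ν(x) (i.e. some final map into X has a colimit). -/
/-! A point `x` lies in `E` exactly when its neighborhood `↓x` is invertible. For `e ∈ E` the
reflection `↓e` is invertible, so a colimiting cone `↓e ⟶ ν(x)` is a colimiting cone from an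
isomorphism, and its uniqueness clause makes `↓x` invertible. Conversely, every point is the colimit
of its own neighborhood. -/

open CategoryTheory CategoryTheory.Limits

universe v u

variable {C : Type u} [Category.{v} C]

namespace IsOrth

variable {A B B' M₀ N : C}

theorem of_isIso (i : A ⟶ B) [IsIso i] (m : M₀ ⟶ N) : IsOrth i m := by
  intro u v hsq
  refine ⟨inv i ≫ u, ⟨by simp, by simp [← hsq]⟩, fun w hw => ?_⟩
  simp [← hw.1]

theorem comp {a : A ⟶ B} {b : B ⟶ B'} {m : M₀ ⟶ N} (ha : IsOrth a m) (hb : IsOrth b m) :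
    IsOrth (a ≫ b) m := by
  intro u v hsq
  obtain ⟨w₁, ⟨hw₁a, hw₁m⟩, hw₁_uniq⟩ := ha u (b ≫ v) (by simpa using hsq)
  obtain ⟨w, ⟨hwb, hwm⟩, hw_uniq⟩ := hb w₁ v hw₁m.symm
  refine ⟨w, ⟨by rw [Category.assoc, hwb, hw₁a], hwm⟩, fun w' ⟨hw'u, hw'v⟩ => hw_uniq w' ⟨?_, hw'v⟩⟩
  exact hw₁_uniq (b ≫ w') ⟨by simpa using hw'u, by simp [hw'v]⟩

/-- Right cancellation: the lift for `b` is the lift for `a ≫ b`, and `a ⊥ m` pins down its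
restriction along `b`. -/
theorem of_comp {a : A ⟶ B} {b : B ⟶ B'} {m : M₀ ⟶ N} (ha : IsOrth a m)
    (hab : IsOrth (a ≫ b) m) : IsOrth b m := by
  intro u v hsq
  obtain ⟨w, ⟨hwa, hwm⟩, hw_uniq⟩ := hab (a ≫ u) v (by simp [hsq])
  obtain ⟨_, -, hu_uniq⟩ := ha (a ≫ u) (b ≫ v) (by simp [hsq])
  have hbw : b ≫ w = u :=
    (hu_uniq _ ⟨by simpa using hwa, by simp [hwm]⟩).trans (hu_uniq u ⟨rfl, hsq.symm⟩).symm
  exact ⟨w, ⟨hbw, hwm⟩, fun w' ⟨hw'u, hw'v⟩ => hw_uniq w' ⟨by simp [hw'u], hw'v⟩⟩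

theorem isIso_of_self {m : M₀ ⟶ N} (hm : IsOrth m m) : IsIso m := by
  obtain ⟨w, ⟨hmw, hwm⟩, -⟩ := hm (𝟙 _) (𝟙 _) (by simp)
  exact ⟨w, hmw, hwm⟩

end IsOrth

namespace FactorizationData

variable (D : FactorizationData C)

theorem isOrth {A B M₀ N : C} {e : A ⟶ B} {m : M₀ ⟶ N} (he : D.E e) (hm : D.M m) :
    IsOrth e m := by
  rw [D.E_eq] at he
  exact he m hm

theorem mem_E_of_isIso_refl {A B : C} (f : A ⟶ B) [IsIso (D.refl f)] : D.E f := by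
  rw [← D.fac f, D.E_eq]
  intro _ _ m hm
  exact (D.isOrth (D.eta_mem f) hm).comp (IsOrth.of_isIso _ m)

/-- `↓e` lies in `M` by construction and in `E` by right cancellation, and `↓e ⊥ ↓e`. -/
theorem isIso_refl_of_mem_E {A B : C} {e : A ⟶ B} (he : D.E e) : IsIso (D.refl e) := by
  have hm := D.refl_mem e
  refine IsOrth.isIso_of_self (IsOrth.of_comp (D.isOrth (D.eta_mem e) hm) ?_)
  rw [D.fac e]
  exact D.isOrth he hm

variable [HasTerminal C]

theorem isColimiting_id {X : C} (x : ⊤_ C ⟶ X) : IsColimiting D (D.refl x) x (𝟙 _) :=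
  fun _ mu hmu => ⟨mu, ⟨hmu, Category.id_comp mu⟩, fun θ hθ => (Category.id_comp θ).symm.trans hθ.2⟩

/-- `inv m ≫ lam` is a section of `↓x`; it is also a retraction because `↓x ≫ inv m ≫ lam` and
`𝟙` both factor `lam` through itself. -/
theorem isIso_refl_of_isColimiting {M₀ X : C} {m : M₀ ⟶ X} [IsIso m] {x : ⊤_ C ⟶ X}
    {lam : M₀ ⟶ D.mid x} (hcone : IsCone D m x lam) (hcolim : IsColimiting D m x lam) :
    IsIso (D.refl x) := by
  have hsection : (inv m ≫ lam) ≫ D.refl x = 𝟙 X := by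
    rw [Category.assoc, hcone, IsIso.inv_hom_id]
  obtain ⟨_, -, hθ_uniq⟩ := hcolim x lam hcone
  have hretraction : D.refl x ≫ inv m ≫ lam = 𝟙 _ :=
    (hθ_uniq _ ⟨by simp [hsection], by simp [reassoc_of% hcone]⟩).trans
      (hθ_uniq (𝟙 _) ⟨Category.id_comp _, Category.comp_id _⟩).symm
  exact ⟨inv m ≫ lam, hretraction, hsection⟩

end FactorizationData

/-- a space `X` has a final point (a point `x : 1 ⟶ X` with `x ∈ E`) iff some
final map into `X` has a colimit, i.e. there are `e : P ⟶ X` in `E`, a point `x : 1 ⟶ X` and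
a colimiting cone `lam : ↓e ⟶ ν(x)`. -/
theorem final_point_iff_final_map_has_colimit [HasTerminal C] (D : FactorizationData C)
    (X : C) :
    (∃ x : ⊤_ C ⟶ X, D.E x) ↔
      ∃ (P : C) (e : P ⟶ X) (x : ⊤_ C ⟶ X) (lam : D.mid e ⟶ D.mid x),
        D.E e ∧ IsCone D (D.refl e) x lam ∧ IsColimiting D (D.refl e) x lam := by
  constructor
  · rintro ⟨x, hx⟩
    exact ⟨⊤_ C, x, x, 𝟙 _, hx, Category.id_comp _, D.isColimiting_id x⟩
  · rintro ⟨P, e, x, lam, he, hcone, hcolim⟩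
    have := D.isIso_refl_of_mem_E he
    have := D.isIso_refl_of_isColimiting hcone hcolim
    exact ⟨x, D.mem_E_of_isIso_refl x⟩
end

section
/- Let p: P ⥤ X be a functor between small categories and x an object of X. The discrete reflection presheaf ↓p is naturally isomorphic to the representable presheaf Hom_X(−, x) (i.e. x is the absolute colimit of p) if and only if for every functor f: X ⥤ Y into a small category Y, the object f x is a colimit of f ∘ p. -/
open CategoryTheory CategoryTheory.Limits

universe u

/-- The discrete reflection presheaf `↓p` of a functor `p : P ⥤ X`: it sends `x` to the set
`π₀(x/p)` of connected components of the comma category `x/p`, with action given by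
precomposition. -/
noncomputable def reflPresheaf {P X : Type u} [SmallCategory P] [SmallCategory X]
    (p : P ⥤ X) : Xᵒᵖ ⥤ Type u where
  obj x := ConnectedComponents (StructuredArrow x.unop p)
  map g := TypeCat.ofHom (StructuredArrow.map g.unop).mapConnectedComponents
  map_id x := by
    ext c
    obtain ⟨s, rfl⟩ := Quotient.exists_rep c
    exact Quotient.sound (Zigzag.of_hom (StructuredArrow.homMk (𝟙 s.right) (by simp)))
  map_comp {x y z} g h := by
    ext c
    obtain ⟨s, rfl⟩ := Quotient.exists_rep c
    exact Quotient.sound (Zigzag.of_hom (StructuredArrow.homMk (𝟙 s.right) (by simp)))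

/-- A functor `n : N ⥤ X` is a discrete fibration if every morphism `g : x ⟶ n b` of `X`
has a unique lifting to a morphism of `N` with codomain `b`. -/
def IsDiscreteFibration {N X : Type u} [SmallCategory N] [SmallCategory X]
    (n : N ⥤ X) : Prop :=
  ∀ (b : N) ⦃x : X⦄ (g : x ⟶ n.obj b),
    ∃! fl : Σ a : N, a ⟶ b, ∃ e : n.obj fl.1 = x, n.map fl.2 = eqToHom e ≫ g

/-- `y` is a colimit of `g` if there is a colimit cocone on `g` with vertex `y`. -/
def IsColimitObj {D Y : Type u} [SmallCategory D] [SmallCategory Y] (g : D ⥤ Y) (y : Y) :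
    Prop :=
  ∃ c : Cocone g, Nonempty (IsColimit c) ∧ c.pt = y

/-! `↓p` is the colimit of `p ⋙ yoneda` among presheaves. An isomorphism `↓p ≅ yoneda x` therefore
lifts, `yoneda` being fully faithful, to a cocone on `p` with vertex `x` whose image under `yoneda`
is a colimit, and such a colimit is absolute: a cocone on `p ⋙ f` with vertex `y` is a cocone on
`p ⋙ yoneda` with vertex `Hom(f -, y)`, and by the Yoneda lemma maps `yoneda x ⟶ Hom(f -, y)` are
maps `f x ⟶ y`. Conversely, apply the hypothesis to `yoneda` corestricted to the small full
subcategory of presheaves spanned by the representables and `↓p`, where both `↓p` and `yoneda x`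
are colimits of `p ⋙ yoneda`. -/

namespace CategoryTheory

def ConnectedComponents.lift {C : Type*} [Category C] {β : Sort*} (F : C → β)
    (hF : ∀ {a b : C}, (a ⟶ b) → F a = F b) : ConnectedComponents C → β :=
  _root_.Quotient.lift F fun _ _ h => by
    induction h with
    | refl => rfl
    | tail _ hz ih => exact hz.elim (fun ⟨k⟩ => ih.trans (hF k)) fun ⟨k⟩ => ih.trans (hF k).symm

namespace Limits

section

variable {J C D : Type*} [Category J] [Category C] [Category D] {K : J ⥤ C}

theorem exists_cocone_pt_eq_isColimit_mapCocone (F : C ⥤ D) [F.Full] [F.Faithful]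
    {l : Cocone (K ⋙ F)} (hl : IsColimit l) (X : C) (i : F.obj X ≅ l.pt) :
    ∃ c : Cocone K, c.pt = X ∧ Nonempty (IsColimit (F.mapCocone c)) := by
  let _ := createsColimitOfFullyFaithfulOfIso' hl X i
  exact ⟨liftColimit hl, rfl, ⟨hl.ofIsoColimit (liftedColimitMapsToOriginal hl).symm⟩⟩

end

section

universe v

variable {J C D : Type*} [Category J] [Category.{v} C] [Category.{v} D] {K : J ⥤ C}

def coconeRestrictYoneda (f : C ⥤ D) (d : Cocone (K ⋙ f)) : Cocone (K ⋙ yoneda) where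
  pt := f.op ⋙ yoneda.obj d.pt
  ι.app j := yonedaEquiv.symm (d.ι.app j)
  ι.naturality _ _ k := (yonedaEquiv_symm_naturality_left _ _ _).trans <|
    (congrArg yonedaEquiv.symm (d.w k)).trans (Category.comp_id _).symm

def isColimitMapCoconeOfIsColimitYonedaMapCocone {c : Cocone K}
    (hc : IsColimit (yoneda.mapCocone c)) (f : C ⥤ D) : IsColimit (f.mapCocone c) where
  desc d := yonedaEquiv (hc.desc (coconeRestrictYoneda f d))
  fac d j := (yonedaEquiv_naturality (hc.desc (coconeRestrictYoneda f d)) (c.ι.app j)).trans <|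
    (congrArg yonedaEquiv (hc.fac (coconeRestrictYoneda f d) j)).trans
      (yonedaEquiv.apply_symm_apply _)
  uniq d m hm := by
    let F := f.op ⋙ yoneda.obj d.pt
    have hdesc : hc.desc (coconeRestrictYoneda f d) = (yonedaEquiv (F := F)).symm m :=
      (hc.uniq _ _ fun j => (yonedaEquiv_symm_naturality_left _ F m).trans
        (congrArg yonedaEquiv.symm (hm j))).symm
    exact ((yonedaEquiv (F := F)).eq_symm_apply.mp hdesc).symm

end

end Limits

end CategoryTheory

section

variable {P X : Type u} [SmallCategory P] [SmallCategory X] (p : P ⥤ X)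

noncomputable def reflPresheafCocone : Cocone (p ⋙ yoneda) where
  pt := reflPresheaf p
  ι.app a :=
    { app z := TypeCat.ofHom fun g => Quotient.mk _ (StructuredArrow.mk (Y := a) g)
      naturality z z' g := by
        ext h
        exact congrArg (Quotient.mk _) (StructuredArrow.map_mk g.unop).symm }
  ι.naturality a a' k := by
    ext z g
    exact Quotient.sound (Zigzag.of_inv (StructuredArrow.homMk k rfl))

noncomputable def isColimitReflPresheafCocone : IsColimit (reflPresheafCocone p) :=
  evaluationJointlyReflectsColimits _ fun z =>
    { desc s := TypeCat.ofHom <| ConnectedComponents.lift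
        (fun t : StructuredArrow z.unop p => s.ι.app t.right t.hom) fun {t t'} k => by
          rw [← StructuredArrow.w k]
          exact (ConcreteCategory.congr_hom (s.w k.right) t.hom).symm
      fac s a := rfl
      uniq s m hm := by
        ext c
        obtain ⟨t, rfl⟩ := Quotient.exists_rep c
        exact ConcreteCategory.congr_hom (hm t.right) t.hom }

end

/-- for a functor `p : P ⥤ X` between small categories and an object `x` of `X`,
the discrete reflection presheaf `↓p` is naturally isomorphic to the representable presheaf
`Hom_X(-, x)` (i.e. `x` is the absolute colimit of `p`) iff for every functor `f : X ⥤ Y`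
into a small category, `f x` is a colimit of `f ∘ p`. -/
theorem absolute_colimit_iff_representable {P X : Type u}
    [SmallCategory P] [SmallCategory X] (p : P ⥤ X) (x : X) :
    Nonempty (reflPresheaf p ≅ yoneda.obj x) ↔
      ∀ (Y : Type u) [SmallCategory Y] (f : X ⥤ Y), IsColimitObj (p ⋙ f) (f.obj x) := by
  constructor
  · rintro ⟨φ⟩ Y _ f
    obtain ⟨ε, rfl, ⟨hε⟩⟩ :=
      exists_cocone_pt_eq_isColimit_mapCocone yoneda (isColimitReflPresheafCocone p) x φ.symm
    exact ⟨f.mapCocone ε, ⟨isColimitMapCoconeOfIsColimitYonedaMapCocone hε f⟩, rfl⟩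
  · intro H
    -- indexing by `Option X` rather than by presheaves keeps this full subcategory small
    let F : Option X → Xᵒᵖ ⥤ Type u := fun o => o.elim (reflPresheaf p) yoneda.obj
    let f : X ⥤ InducedCategory (Xᵒᵖ ⥤ Type u) F :=
      { obj := some
        map g := InducedCategory.homMk (yoneda.map g)
        map_id z := InducedCategory.hom_ext (yoneda.map_id z)
        map_comp g h := InducedCategory.hom_ext (yoneda.map_comp g h) }
    obtain ⟨σ, hσpt, ⟨hσ⟩⟩ := exists_cocone_pt_eq_isColimit_mapCocone (K := p ⋙ f)
      (inducedFunctor F) (isColimitReflPresheafCocone p) none (Iso.refl _)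
    obtain ⟨c, ⟨hc⟩, hcpt⟩ := H _ f
    exact ⟨(inducedFunctor F).mapIso (eqToIso hσpt.symm ≪≫
      (isColimitOfReflects _ hσ).coconePointUniqueUpToIso hc ≪≫ eqToIso hcpt)⟩
end
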